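/- Let 0 < δ ≤ 1, v a unit vector in ℝ², and σ a finite Borel measure on ℝ² with |σ̂(x)| ≤ C|x·v|^{−δ} for all |x| ≥ 1. Then for q > 2/δ, ∫ |Ef(x)|^q w(x) dx ≲ (sup_{T ∈ 𝕋_v} w(T)) ‖f‖_{L²(σ)}^q for all f ∈ L²(σ) and all bounded measurable w : ℝ² → [0,∞), where 𝕋_v is the set of 1-tubes whose core lines are perpendicular to v, and the implicit constant depends only on C, δ, q, ‖σ‖. -/

import Mathlib

open MeasureTheory ENNReal Real

noncomputable section

abbrev Plane := ℝ × ℝ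
/-- The Fourier kernel `e^{-2πi x·ξ}` on `ℝ²`. -/
def fourierKer (x ξ : Plane) : ℂ :=
  Complex.exp (((-2 * Real.pi * (x.1 * ξ.1 + x.2 * ξ.2) : ℝ) : ℂ) * Complex.I)

/-- The extension operator `Ef(x) = ∫ e^{-2πi x·ξ} f(ξ) dσ(ξ)`. -/
def extOp (σ : Measure Plane) (f : Plane → ℂ) (x : Plane) : ℂ :=
  ∫ ξ, fourierKer x ξ * f ξ ∂σ

/-- The Fourier transform `σ̂(x) = ∫ e^{-2πi x·ξ} dσ(ξ)` of the measure `σ`. -/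
def ftMeasure (σ : Measure Plane) (x : Plane) : ℂ := ∫ ξ, fourierKer x ξ ∂σ

/-- The `L²(σ)` norm of `f`. -/
def L2n (σ : Measure Plane) (f : Plane → ℂ) : ℝ := (∫ ξ, ‖f ξ‖ ^ 2 ∂σ) ^ ((1 : ℝ) / 2)
/-- The 1-tube (closed `(1/2)`-neighborhood of a line) with unit direction `u` through `p`. -/
def oneTube (u p : Plane) : Set Plane :=
  {x | |(x.1 - p.1) * (-u.2) + (x.2 - p.2) * u.1| ≤ 1 / 2}

/-- `w(T) = ∫_T w` for the 1-tube with direction `u` through `p`. -/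
def wTube (w : Plane → ℝ) (u p : Plane) : ℝ≥0∞ :=
  ∫⁻ x in oneTube u p, ENNReal.ofReal (w x)

/-- `sup_T w(T)` over all 1-tubes with core line of direction `u`. -/
def tubeSup (w : Plane → ℝ) (u : Plane) : ℝ≥0∞ := ⨆ p : Plane, wTube w u p

/-! ### Auxiliary material for the proof -/

lemma norm_fourierKer (x ξ : Plane) : ‖fourierKer x ξ‖ = 1 := by
  rw [fourierKer, Complex.norm_exp]
  simp [Complex.mul_re, Complex.ofReal_re, Complex.ofReal_im, Complex.I_re, Complex.I_im]

lemma continuous_fourierKer (x : Plane) : Continuous (fun ξ => fourierKer x ξ) := by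
  unfold fourierKer
  exact Complex.continuous_exp.comp <| (Complex.continuous_ofReal.comp <| by fun_prop).mul
    continuous_const

lemma fourierKer_mul_conj (x y ξ : Plane) :
    fourierKer x ξ * (starRingEnd ℂ) (fourierKer y ξ) = fourierKer (x - y) ξ := by
  unfold fourierKer
  rw [← Complex.exp_conj, ← Complex.exp_add]
  congr 1
  rw [map_mul, Complex.conj_I, Complex.conj_ofReal]
  simp only [Prod.fst_sub, Prod.snd_sub]
  push_cast
  ring

lemma integrable_of_bdd_cont {σ : Measure Plane} [IsFiniteMeasure σ] {h : Plane → ℂ} {c : ℝ}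
    (hc : Continuous h) (hb : ∀ ξ, ‖h ξ‖ ≤ c) : Integrable h σ :=
  Integrable.mono' (integrable_const c) hc.aestronglyMeasurable (Filter.Eventually.of_forall hb)

/-- The dominating sequence `m(j)`. -/
def mker (σT C δ : ℝ) (j : ℤ) : ℝ :=
  if j.natAbs ≤ 1 then σT else C * ((j.natAbs : ℝ) - 1) ^ (-δ)

lemma mker_nonneg {σT C δ : ℝ} (hσT : 0 ≤ σT) (hC : 0 ≤ C) (j : ℤ) : 0 ≤ mker σT C δ j := by
  unfold mker; split
  · exact hσT
  · next h =>
      have h2 : 2 ≤ j.natAbs := by omega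
      have hb : (0:ℝ) ≤ (j.natAbs : ℝ) - 1 := by
        have : (2:ℝ) ≤ (j.natAbs : ℝ) := by exact_mod_cast h2
        linarith
      exact mul_nonneg hC (Real.rpow_nonneg hb _)

/-- Discrete Young-type inequality for the quadratic form. -/
lemma young_discrete {q : ℝ} (hq2 : 2 < q) (u : ℤ → ℝ) (hu : ∀ k, 0 ≤ u k)
    (m : ℤ → ℝ) (hm : ∀ j, 0 ≤ m j) (Ms : ℝ)
    (hMs : ∀ G : Finset ℤ, ∑ j ∈ G, m j ^ (q / 2) ≤ Ms) (F : Finset ℤ) :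
    ∑ k ∈ F, ∑ l ∈ F, u k * m (k - l) * u l ≤
      Ms ^ (2 / q) * (∑ k ∈ F, u k ^ (q / (q - 1))) ^ (2 * ((q - 1) / q)) := by
  have hq0 : (0:ℝ) < q := by linarith
  have hq1 : (1:ℝ) < q := by linarith
  have hqm1 : (0:ℝ) < q - 1 := by linarith
  have hqm2 : (0:ℝ) < q - 2 := by linarith
  set p : ℝ := q / (q - 1) with hp_def
  have hp1 : 1 < p := by
    rw [hp_def, lt_div_iff₀ hqm1]; linarith
  have hp0 : 0 < p := lt_trans one_pos hp1
  have hpq : Real.HolderConjugate p q :=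
    Real.holderConjugate_iff.mpr ⟨hp1, by rw [hp_def]; field_simp; ring⟩
  have hab : Real.HolderConjugate (q - 1) ((q - 1) / (q - 2)) :=
    Real.holderConjugate_iff.mpr ⟨by linarith, by field_simp; ring⟩
  have hMs0 : 0 ≤ Ms := le_trans (by simp) (hMs ∅)
  set U : ℝ := ∑ k ∈ F, u k ^ p with hU_def
  have hU0 : 0 ≤ U := Finset.sum_nonneg fun k _ => Real.rpow_nonneg (hu k) _
  set s : ℝ := q / 2 with hs_def
  -- row/column bounds
  have hrow : ∀ kk : ℤ, ∑ l ∈ F, m (kk - l) ^ s ≤ Ms := by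
    intro kk
    have : ∑ l ∈ F, m (kk - l) ^ s = ∑ j ∈ F.image (fun l => kk - l), m j ^ s := by
      rw [Finset.sum_image (fun a _ b _ h => by omega)]
    rw [this]; exact hMs _
  have hcol : ∀ ll : ℤ, ∑ k ∈ F, m (k - ll) ^ s ≤ Ms := by
    intro ll
    have : ∑ k ∈ F, m (k - ll) ^ s = ∑ j ∈ F.image (fun k => k - ll), m j ^ s := by
      rw [Finset.sum_image (fun a _ b _ h => by omega)]
    rw [this]; exact hMs _
  set c : ℤ → ℝ := fun k => ∑ l ∈ F, m (k - l) * u l with hc_def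
  have hc0 : ∀ k, 0 ≤ c k := fun k =>
    Finset.sum_nonneg fun l _ => mul_nonneg (hm _) (hu l)
  set D : ℤ → ℝ := fun k => ∑ l ∈ F, m (k - l) ^ s * u l ^ p with hD_def
  have hD0 : ∀ k, 0 ≤ D k := fun k =>
    Finset.sum_nonneg fun l _ => mul_nonneg (Real.rpow_nonneg (hm _) _) (Real.rpow_nonneg (hu l) _)
  -- Step 1 : rewrite the quadratic form
  have hQ : ∑ k ∈ F, ∑ l ∈ F, u k * m (k - l) * u l = ∑ k ∈ F, u k * c k := by
    refine Finset.sum_congr rfl fun k _ => ?_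
    rw [hc_def, Finset.mul_sum]
    exact Finset.sum_congr rfl fun l _ => by ring
  -- Step 2 : outer Hölder
  have step2 : ∑ k ∈ F, u k * c k ≤
      (∑ k ∈ F, u k ^ p) ^ (1 / p) * (∑ k ∈ F, c k ^ q) ^ (1 / q) :=
    Real.inner_le_Lp_mul_Lq_of_nonneg F hpq (fun i _ => hu i) (fun i _ => hc0 i)
  -- Step 3 : inner Hölder for each k
  have step3 : ∀ k : ℤ, c k ≤ D k ^ (1 / q) * (Ms ^ (1 / q) * U ^ ((q - 2) / q)) := by
    intro k
    set X : ℤ → ℝ := fun l => (m (k - l) ^ s * u l ^ p) ^ (1 / q) with hX_def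
    set W : ℤ → ℝ := fun l => m (k - l) ^ ((1:ℝ)/2) * u l ^ ((q - 2) / (q - 1)) with hW_def
    have hX0 : ∀ l, 0 ≤ X l := fun l => Real.rpow_nonneg
      (mul_nonneg (Real.rpow_nonneg (hm _) _) (Real.rpow_nonneg (hu l) _)) _
    have hW0 : ∀ l, 0 ≤ W l := fun l =>
      mul_nonneg (Real.rpow_nonneg (hm _) _) (Real.rpow_nonneg (hu l) _)
    have hXW : ∀ l ∈ F, m (k - l) * u l = X l * W l := by
      intro l _
      simp only [hX_def, hW_def]
      have e1 : (m (k - l) ^ s * u l ^ p) ^ (1/q)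
          = m (k - l) ^ ((1:ℝ)/2) * u l ^ (1 / (q - 1)) := by
        rw [Real.mul_rpow (Real.rpow_nonneg (hm _) _) (Real.rpow_nonneg (hu l) _),
          ← Real.rpow_mul (hm _), ← Real.rpow_mul (hu l)]
        congr 1
        · congr 1; rw [hs_def]; field_simp; all_goals ring
        · congr 1; rw [hp_def]; field_simp; all_goals ring
      rw [e1]
      have e2 : m (k - l) ^ ((1:ℝ)/2) * u l ^ (1 / (q - 1)) *
          (m (k - l) ^ ((1:ℝ)/2) * u l ^ ((q - 2) / (q - 1)))
          = (m (k - l) ^ ((1:ℝ)/2) * m (k - l) ^ ((1:ℝ)/2)) *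
            (u l ^ (1 / (q - 1)) * u l ^ ((q - 2) / (q - 1))) := by ring
      have e3 : 1 / (q - 1) + (q - 2) / (q - 1) = 1 := by
        rw [← add_div, show (1:ℝ) + (q - 2) = q - 1 by ring,
          div_self (ne_of_gt hqm1)]
      have hne : 1 / (q - 1) + (q - 2) / (q - 1) ≠ 0 := by rw [e3]; norm_num
      rw [e2, ← Real.rpow_add' (hm _) (by norm_num : (1:ℝ)/2 + 1/2 ≠ 0),
        ← Real.rpow_add' (hu l) hne,
        show (1:ℝ)/2 + 1/2 = 1 by norm_num, e3, Real.rpow_one, Real.rpow_one]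
    have inner : ∑ l ∈ F, m (k - l) * u l ≤
        (∑ l ∈ F, X l ^ q) ^ (1 / q) * (∑ l ∈ F, W l ^ p) ^ (1 / p) := by
      calc ∑ l ∈ F, m (k - l) * u l = ∑ l ∈ F, X l * W l :=
            Finset.sum_congr rfl hXW
      _ ≤ (∑ l ∈ F, X l ^ q) ^ (1 / q) * (∑ l ∈ F, W l ^ p) ^ (1 / p) :=
            Real.inner_le_Lp_mul_Lq_of_nonneg F hpq.symm (fun i _ => hX0 i) (fun i _ => hW0 i)
    have hXq : ∑ l ∈ F, X l ^ q = D k := by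
      refine Finset.sum_congr rfl fun l _ => ?_
      rw [hX_def, ← Real.rpow_mul
        (mul_nonneg (Real.rpow_nonneg (hm _) _) (Real.rpow_nonneg (hu l) _))]
      rw [one_div, inv_mul_cancel₀ (ne_of_gt hq0), Real.rpow_one]
    have hWp : ∑ l ∈ F, W l ^ p ≤ Ms ^ (1 / (q - 1)) * U ^ ((q - 2) / (q - 1)) := by
      have hWpl : ∀ l ∈ F, W l ^ p =
          m (k - l) ^ (p / 2) * u l ^ (p * (q - 2) / (q - 1)) := by
        intro l _
        rw [hW_def, Real.mul_rpow (Real.rpow_nonneg (hm _) _) (Real.rpow_nonneg (hu l) _),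
          ← Real.rpow_mul (hm _), ← Real.rpow_mul (hu l)]
        congr 1
        · congr 1; ring
        · congr 1; ring
      rw [Finset.sum_congr rfl hWpl]
      have holder2 : ∑ l ∈ F, m (k - l) ^ (p / 2) * u l ^ (p * (q - 2) / (q - 1)) ≤
          (∑ l ∈ F, (m (k - l) ^ (p / 2)) ^ (q - 1)) ^ (1 / (q - 1)) *
          (∑ l ∈ F, (u l ^ (p * (q - 2) / (q - 1))) ^ ((q - 1) / (q - 2))) ^ (1 / ((q - 1) / (q - 2))) :=
        Real.inner_le_Lp_mul_Lq_of_nonneg F hab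
          (fun i _ => Real.rpow_nonneg (hm _) _) (fun i _ => Real.rpow_nonneg (hu i) _)
      have e1 : ∑ l ∈ F, (m (k - l) ^ (p / 2)) ^ (q - 1) = ∑ l ∈ F, m (k - l) ^ s := by
        refine Finset.sum_congr rfl fun l _ => ?_
        rw [← Real.rpow_mul (hm _)]
        congr 1
        rw [hp_def, hs_def]; field_simp
      have e2 : ∑ l ∈ F, (u l ^ (p * (q - 2) / (q - 1))) ^ ((q - 1) / (q - 2)) = U := by
        rw [hU_def]
        refine Finset.sum_congr rfl fun l _ => ?_
        rw [← Real.rpow_mul (hu l)]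
        congr 1
        rw [hp_def]; field_simp; all_goals ring
      rw [e1, e2] at holder2
      refine le_trans holder2 ?_
      have hsum_nonneg : (0:ℝ) ≤ ∑ l ∈ F, m (k - l) ^ s :=
        Finset.sum_nonneg fun l _ => Real.rpow_nonneg (hm _) _
      have hinv : 1 / ((q - 1) / (q - 2)) = (q - 2) / (q - 1) := by field_simp
      rw [hinv]
      exact mul_le_mul_of_nonneg_right
        (Real.rpow_le_rpow hsum_nonneg (hrow k) (le_of_lt (one_div_pos.mpr hqm1)))
        (Real.rpow_nonneg hU0 _)
    have hWp' : (∑ l ∈ F, W l ^ p) ^ (1 / p) ≤ Ms ^ (1 / q) * U ^ ((q - 2) / q) := by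
      have h0 : (0:ℝ) ≤ ∑ l ∈ F, W l ^ p :=
        Finset.sum_nonneg fun l _ => Real.rpow_nonneg (hW0 l) _
      calc (∑ l ∈ F, W l ^ p) ^ (1 / p)
          ≤ (Ms ^ (1 / (q - 1)) * U ^ ((q - 2) / (q - 1))) ^ (1 / p) :=
            Real.rpow_le_rpow h0 hWp (le_of_lt (one_div_pos.mpr hp0))
      _ = Ms ^ (1 / q) * U ^ ((q - 2) / q) := by
            rw [Real.mul_rpow (Real.rpow_nonneg hMs0 _) (Real.rpow_nonneg hU0 _),
              ← Real.rpow_mul hMs0, ← Real.rpow_mul hU0]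
            congr 2
            · rw [hp_def]; field_simp
            · rw [hp_def]; field_simp
    calc c k = ∑ l ∈ F, m (k - l) * u l := by rw [hc_def]
    _ ≤ (∑ l ∈ F, X l ^ q) ^ (1 / q) * (∑ l ∈ F, W l ^ p) ^ (1 / p) := inner
    _ = D k ^ (1 / q) * (∑ l ∈ F, W l ^ p) ^ (1 / p) := by rw [hXq]
    _ ≤ D k ^ (1 / q) * (Ms ^ (1 / q) * U ^ ((q - 2) / q)) :=
        mul_le_mul_of_nonneg_left hWp' (Real.rpow_nonneg (hD0 k) _)
  -- Step 5 : sum the q-th powers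
  have step5 : ∑ k ∈ F, c k ^ q ≤ (U * Ms) * (Ms * U ^ (q - 2)) := by
    have per_k : ∀ k ∈ F, c k ^ q ≤ D k * (Ms * U ^ (q - 2)) := by
      intro k _
      calc c k ^ q ≤ (D k ^ (1 / q) * (Ms ^ (1 / q) * U ^ ((q - 2) / q))) ^ q :=
            Real.rpow_le_rpow (hc0 k) (step3 k) (le_of_lt hq0)
      _ = D k * (Ms * U ^ (q - 2)) := by
            rw [Real.mul_rpow (Real.rpow_nonneg (hD0 k) _)
                (mul_nonneg (Real.rpow_nonneg hMs0 _) (Real.rpow_nonneg hU0 _)),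
              Real.mul_rpow (Real.rpow_nonneg hMs0 _) (Real.rpow_nonneg hU0 _),
              ← Real.rpow_mul (hD0 k), ← Real.rpow_mul hMs0, ← Real.rpow_mul hU0,
              one_div, inv_mul_cancel₀ (ne_of_gt hq0), Real.rpow_one, Real.rpow_one,
              div_mul_cancel₀ _ (ne_of_gt hq0)]
    calc ∑ k ∈ F, c k ^ q ≤ ∑ k ∈ F, D k * (Ms * U ^ (q - 2)) :=
          Finset.sum_le_sum per_k
    _ = (∑ k ∈ F, D k) * (Ms * U ^ (q - 2)) := by rw [Finset.sum_mul]
    _ ≤ (U * Ms) * (Ms * U ^ (q - 2)) := by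
          refine mul_le_mul_of_nonneg_right ?_
            (mul_nonneg hMs0 (Real.rpow_nonneg hU0 _))
          have hDsum : ∑ k ∈ F, D k = ∑ l ∈ F, u l ^ p * (∑ k ∈ F, m (k - l) ^ s) := by
            rw [hD_def, Finset.sum_comm]
            refine Finset.sum_congr rfl fun l _ => ?_
            rw [Finset.mul_sum]
            exact Finset.sum_congr rfl fun k _ => by ring
          rw [hDsum]
          calc ∑ l ∈ F, u l ^ p * (∑ k ∈ F, m (k - l) ^ s)
              ≤ ∑ l ∈ F, u l ^ p * Ms :=
                Finset.sum_le_sum fun l _ =>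
                  mul_le_mul_of_nonneg_left (hcol l) (Real.rpow_nonneg (hu l) _)
          _ = U * Ms := by rw [← Finset.sum_mul]
  -- Final combination
  have hcq0 : (0:ℝ) ≤ ∑ k ∈ F, c k ^ q :=
    Finset.sum_nonneg fun k _ => Real.rpow_nonneg (hc0 k) _
  have final : (∑ k ∈ F, c k ^ q) ^ (1 / q) ≤ Ms ^ (2 / q) * U ^ ((q - 1) / q) := by
    calc (∑ k ∈ F, c k ^ q) ^ (1 / q)
        ≤ ((U * Ms) * (Ms * U ^ (q - 2))) ^ (1 / q) :=
          Real.rpow_le_rpow hcq0 step5 (le_of_lt (one_div_pos.mpr hq0))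
    _ = Ms ^ (2 / q) * U ^ ((q - 1) / q) := by
          have e : (U * Ms) * (Ms * U ^ (q - 2)) = (Ms * Ms) * (U * U ^ (q - 2)) := by ring
          rw [e]
          have eU : U * U ^ (q - 2) = U ^ (q - 1) := by
            nth_rewrite 1 [← Real.rpow_one U]
            rw [← Real.rpow_add' hU0
              (by rw [show (1:ℝ) + (q - 2) = q - 1 by ring]; exact ne_of_gt hqm1),
              show (1:ℝ) + (q - 2) = q - 1 by ring]
          have eM : Ms * Ms = Ms ^ (2:ℝ) := by
            rw [show (2:ℝ) = 1 + 1 by norm_num, Real.rpow_add' hMs0 (by norm_num),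
              Real.rpow_one]
          rw [eU, eM, Real.mul_rpow (Real.rpow_nonneg hMs0 _) (Real.rpow_nonneg hU0 _),
            ← Real.rpow_mul hMs0, ← Real.rpow_mul hU0]
          congr 2
          · ring
          · ring
  calc ∑ k ∈ F, ∑ l ∈ F, u k * m (k - l) * u l = ∑ k ∈ F, u k * c k := hQ
  _ ≤ U ^ (1 / p) * (∑ k ∈ F, c k ^ q) ^ (1 / q) := step2
  _ ≤ U ^ (1 / p) * (Ms ^ (2 / q) * U ^ ((q - 1) / q)) :=
      mul_le_mul_of_nonneg_left final (Real.rpow_nonneg hU0 _)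
  _ = Ms ^ (2 / q) * (U ^ (1 / p) * U ^ ((q - 1) / q)) := by ring
  _ = Ms ^ (2 / q) * U ^ (2 * ((q - 1) / q)) := by
      congr 1
      have hpinv : 1 / p = (q - 1) / q := by rw [hp_def]; field_simp
      have hne2 : (q - 1) / q + (q - 1) / q ≠ 0 := by
        have : (0:ℝ) < (q - 1) / q := div_pos hqm1 hq0
        positivity
      rw [hpinv, ← Real.rpow_add' hU0 hne2]
      congr 1
      ring
  

/-- Sum of sups is bounded provided every choice-sum is. -/
lemma sum_biSup_le {ι α : Type*} [DecidableEq ι] (A : ι → Set α) (hA : ∀ k, (A k).Nonempty)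
    (φ : α → ℝ≥0∞) (X : ℝ≥0∞) (F : Finset ι)
    (H : ∀ g : ι → α, (∀ k, g k ∈ A k) → ∑ k ∈ F, φ (g k) ≤ X) :
    ∑ k ∈ F, (⨆ x ∈ A k, φ x) ≤ X := by
  have main : ∀ F : Finset ι, ∀ e : ℝ≥0∞,
      (∀ g : ι → α, (∀ k, g k ∈ A k) → e + ∑ k ∈ F, φ (g k) ≤ X) →
      e + ∑ k ∈ F, (⨆ x ∈ A k, φ x) ≤ X := by
    intro F
    induction F using Finset.induction_on with
    | empty =>
        intro e he
        simpa using he (fun k => (hA k).choose) (fun k => (hA k).choose_spec)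
    | @insert a G ha IH =>
        intro e he
        rw [Finset.sum_insert ha, ← add_assoc]
        -- goal : e + (⨆ x ∈ A a, φ x) + ∑ k ∈ G, ⨆ ... ≤ X
        apply IH
        intro g hg
        have : (e + ⨆ x ∈ A a, φ x) + ∑ k ∈ G, φ (g k) =
            ⨆ x ∈ A a, (e + φ x + ∑ k ∈ G, φ (g k)) := by
          rw [ENNReal.add_biSup' (hA a), ENNReal.biSup_add' (hA a)]
        rw [this]
        refine iSup₂_le fun x hx => ?_
        have hg' : ∀ k, Function.update g a x k ∈ A k := by
          intro k
          rcases eq_or_ne k a with rfl | hk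
          · simpa using hx
          · simpa [Function.update_of_ne hk] using hg k
        have := he (Function.update g a x) hg'
        rw [Finset.sum_insert ha] at this
        have hsum : ∑ k ∈ G, φ (Function.update g a x k) = ∑ k ∈ G, φ (g k) :=
          Finset.sum_congr rfl fun k hk => by
            rw [Function.update_of_ne (by rintro rfl; exact ha hk)]
        rw [hsum, Function.update_self] at this
        calc e + φ x + ∑ k ∈ G, φ (g k) = e + (φ x + ∑ k ∈ G, φ (g k)) := by ring
        _ ≤ X := this
  have := main F 0 (fun g hg => by simpa using H g hg)
  simpa using this

/-- Core discrete estimate: for points `x_k` in the `k`-th slab,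
`∑ ‖Ef(x_k)‖^q ≤ Ms ‖f‖_{L²(σ)}^q`. -/
lemma core_estimate (σ : Measure Plane) [IsFiniteMeasure σ]
    (v : Plane) (hv : v.1 ^ 2 + v.2 ^ 2 = 1) (δ C : ℝ)
    (hδ : 0 < δ) (hC : 0 < C)
    (hdecay : ∀ x : Plane, 1 ≤ Real.sqrt (x.1 ^ 2 + x.2 ^ 2) →
      x.1 * v.1 + x.2 * v.2 ≠ 0 →
      ‖ftMeasure σ x‖ ≤ C * |x.1 * v.1 + x.2 * v.2| ^ (-δ))
    (q : ℝ) (hq2 : 2 < q)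
    (f : Plane → ℂ) (hf : MemLp f 2 σ) (Ms : ℝ) (hMs0 : 0 ≤ Ms)
    (hMs : ∀ G : Finset ℤ, ∑ j ∈ G, (mker (σ Set.univ).toReal C δ j) ^ (q / 2) ≤ Ms)
    (F : Finset ℤ) (g : ℤ → Plane)
    (hg : ∀ k : ℤ, (g k).1 * v.1 + (g k).2 * v.2 ∈ Set.Ioc ((k : ℝ) - 1/2) ((k : ℝ) + 1/2)) :
    ∑ k ∈ F, ‖extOp σ f (g k)‖ ^ q ≤ Ms * L2n σ f ^ q := by
  classical
  have hq0 : (0:ℝ) < q := by linarith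
  have hqm1 : (0:ℝ) < q - 1 := by linarith
  have hqm2 : (0:ℝ) < q - 2 := by linarith
  set σT : ℝ := (σ Set.univ).toReal with hσT_def
  have hσT0 : 0 ≤ σT := ENNReal.toReal_nonneg
  set a : ℤ → ℂ := fun k => extOp σ f (g k) with ha_def
  set u : ℤ → ℝ := fun k => ‖a k‖ ^ (q - 1) with hu_def
  have hu0 : ∀ k, 0 ≤ u k := fun k => Real.rpow_nonneg (norm_nonneg _) _
  set b : ℤ → ℂ := fun k => ((‖a k‖ ^ (q - 2) : ℝ) : ℂ) * (starRingEnd ℂ) (a k) with hb_def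
  set A : ℝ := ∑ k ∈ F, ‖a k‖ ^ q with hA_def
  have hA0 : 0 ≤ A := Finset.sum_nonneg fun k _ => Real.rpow_nonneg (norm_nonneg _) _
  have hL2n0 : 0 ≤ L2n σ f := Real.rpow_nonneg
    (integral_nonneg fun ξ => by positivity) _
  -- basic identities for b
  have h_ba : ∀ k, b k * a k = ((‖a k‖ ^ q : ℝ) : ℂ) := by
    intro k
    rw [hb_def]
    have : ((‖a k‖ ^ (q - 2) : ℝ) : ℂ) * (starRingEnd ℂ) (a k) * a k
        = ((‖a k‖ ^ (q - 2) : ℝ) : ℂ) * (a k * (starRingEnd ℂ) (a k)) := by ring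
    rw [this, Complex.mul_conj]
    rw [show ((Complex.normSq (a k) : ℝ) : ℂ) = ((‖a k‖ ^ 2 : ℝ) : ℂ) by
      norm_cast; rw [Complex.sq_norm]]
    rw [← Complex.ofReal_mul]
    congr 1
    rcases eq_or_lt_of_le (norm_nonneg (a k)) with h0 | hpos
    · rw [← h0, Real.zero_rpow (by linarith : q - 2 ≠ 0), Real.zero_rpow (ne_of_gt hq0)]
      ring
    · rw [show ‖a k‖ ^ 2 = ‖a k‖ ^ ((2:ℕ):ℝ) from (Real.rpow_natCast _ 2).symm,
        ← Real.rpow_add hpos]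
      norm_num
  have h_bnorm : ∀ k, ‖b k‖ = u k := by
    intro k
    have hbn : ‖b k‖ = ‖a k‖ ^ (q - 2) * ‖a k‖ := by
      rw [hb_def]
      simp only []
      rw [norm_mul, Complex.norm_real, RCLike.norm_conj,
        Real.norm_of_nonneg (Real.rpow_nonneg (norm_nonneg _) _)]
    rw [hbn, hu_def]
    simp only []
    rcases eq_or_lt_of_le (norm_nonneg (a k)) with h0 | hpos
    · rw [← h0, Real.zero_rpow (by linarith : q - 2 ≠ 0),
        Real.zero_rpow (by linarith : q - 1 ≠ 0)]
      ring
    · nth_rewrite 2 [show ‖a k‖ = ‖a k‖ ^ (1:ℝ) from (Real.rpow_one _).symm]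
      rw [← Real.rpow_add hpos]
      congr 1
      ring
  -- integrability
  have hfi : Integrable f σ := hf.integrable one_le_two
  have hIntKf : ∀ x : Plane, Integrable (fun ξ => fourierKer x ξ * f ξ) σ := fun x =>
    Integrable.bdd_mul hfi (continuous_fourierKer x).aestronglyMeasurable
      (c := 1) (Filter.Eventually.of_forall fun ξ => le_of_eq (norm_fourierKer x ξ))
  set G : Plane → ℂ := fun ξ => ∑ k ∈ F, b k * fourierKer (g k) ξ with hG_def
  have hGcont : Continuous G := by
    rw [hG_def]
    exact continuous_finset_sum _ fun k _ => continuous_const.mul (continuous_fourierKer _)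
  set CB : ℝ := ∑ k ∈ F, ‖b k‖ with hCB_def
  have hGbd : ∀ ξ, ‖G ξ‖ ≤ CB := by
    intro ξ
    rw [hG_def, hCB_def]
    refine le_trans (norm_sum_le _ _) (le_of_eq ?_)
    exact Finset.sum_congr rfl fun k _ => by
      rw [norm_mul, norm_fourierKer, mul_one]
  -- Claim 1 : A = ∫ G f
  have claim1 : ∫ ξ, G ξ * f ξ ∂σ = ((A : ℝ) : ℂ) := by
    have e : (fun ξ => G ξ * f ξ) =
        fun ξ => ∑ k ∈ F, b k * (fourierKer (g k) ξ * f ξ) := by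
      funext ξ
      rw [hG_def, Finset.sum_mul]
      exact Finset.sum_congr rfl fun k _ => by ring
    rw [e, integral_finset_sum F (fun k _ => (hIntKf (g k)).const_mul (b k))]
    have e2 : ∀ k ∈ F, (∫ ξ, b k * (fourierKer (g k) ξ * f ξ) ∂σ)
        = ((‖a k‖ ^ q : ℝ) : ℂ) := by
      intro k _
      rw [integral_const_mul]
      exact h_ba k
    rw [Finset.sum_congr rfl e2, hA_def]
    push_cast
    rfl
  -- Claim 3 : ∫ ‖G‖² ≤ Q
  set Q : ℝ := ∑ k ∈ F, ∑ l ∈ F, u k * mker σT C δ (k - l) * u l with hQ_def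
  have hft : ∀ k l : ℤ, ‖ftMeasure σ (g k - g l)‖ ≤ mker σT C δ (k - l) := by
    intro k l
    by_cases hkl : (k - l).natAbs ≤ 1
    · rw [mker, if_pos hkl]
      calc ‖ftMeasure σ (g k - g l)‖ ≤ ∫ ξ, ‖fourierKer (g k - g l) ξ‖ ∂σ :=
            norm_integral_le_integral_norm _
      _ = ∫ _ξ, (1:ℝ) ∂σ := by
            simp only [norm_fourierKer]
      _ = σT := by rw [integral_const, smul_eq_mul, mul_one, hσT_def]; rfl
    · rw [mker, if_neg hkl]
      set z : Plane := g k - g l with hz_def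
      set t : ℝ := z.1 * v.1 + z.2 * v.2 with ht_def
      set n : ℕ := (k - l).natAbs with hn_def
      have hn2 : 2 ≤ n := by omega
      have hn2' : (2:ℝ) ≤ (n:ℝ) := by exact_mod_cast hn2
      have hK : ((n:ℝ)) = |((k:ℝ) - (l:ℝ))| := by
        rw [hn_def]
        push_cast [Nat.cast_natAbs]
        ring
      have htkl : t = ((g k).1 * v.1 + (g k).2 * v.2) - ((g l).1 * v.1 + (g l).2 * v.2) := by
        rw [ht_def, hz_def]
        simp only [Prod.fst_sub, Prod.snd_sub]
        ring
      obtain ⟨hgk1, hgk2⟩ := hg k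
      obtain ⟨hgl1, hgl2⟩ := hg l
      have htK : |t - ((k:ℝ) - (l:ℝ))| < 1 := by
        rw [abs_lt, htkl]
        constructor <;> linarith
      have hlow : (n:ℝ) - 1 ≤ |t| := by
        have h1 : |((k:ℝ) - (l:ℝ))| - |t| ≤ |((k:ℝ) - (l:ℝ)) - t| := abs_sub_abs_le_abs_sub _ _
        have htK2 : |((k:ℝ) - (l:ℝ)) - t| < 1 := by rw [abs_sub_comm]; exact htK
        rw [hK]
        linarith
      have ht1 : 1 ≤ |t| := by linarith
      have htne : t ≠ 0 := fun h => by rw [h, abs_zero] at ht1; linarith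
      have hsq : t ^ 2 ≤ z.1 ^ 2 + z.2 ^ 2 := by
        rw [ht_def]
        nlinarith [sq_nonneg (z.1 * v.2 - z.2 * v.1), hv]
      have hsqrt : 1 ≤ Real.sqrt (z.1 ^ 2 + z.2 ^ 2) := by
        calc (1:ℝ) ≤ |t| := ht1
        _ = Real.sqrt (t ^ 2) := (Real.sqrt_sq_eq_abs t).symm
        _ ≤ Real.sqrt (z.1 ^ 2 + z.2 ^ 2) := Real.sqrt_le_sqrt hsq
      have hdec := hdecay z hsqrt (by rw [← ht_def]; exact htne)
      rw [← ht_def] at hdec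
      refine le_trans hdec ?_
      refine mul_le_mul_of_nonneg_left ?_ (le_of_lt hC)
      exact Real.rpow_le_rpow_of_nonpos (by linarith) hlow (by linarith)
  have hGsq_int : ∫ ξ, ‖G ξ‖ ^ 2 ∂σ ≤ Q := by
    have hpt : ∀ ξ, G ξ * (starRingEnd ℂ) (G ξ) =
        ∑ k ∈ F, ∑ l ∈ F, (b k * (starRingEnd ℂ) (b l)) * fourierKer (g k - g l) ξ := by
      intro ξ
      rw [hG_def]
      rw [map_sum]
      rw [Finset.sum_mul_sum]
      refine Finset.sum_congr rfl fun k _ => Finset.sum_congr rfl fun l _ => ?_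
      rw [map_mul, ← fourierKer_mul_conj (g k) (g l) ξ]
      ring
    have hIker : ∀ (y : Plane) (c : ℂ), Integrable (fun ξ => c * fourierKer y ξ) σ :=
      fun y c => (integrable_of_bdd_cont (continuous_fourierKer y)
        (fun ξ => le_of_eq (norm_fourierKer y ξ))).const_mul c
    have hint : ∫ ξ, G ξ * (starRingEnd ℂ) (G ξ) ∂σ =
        ∑ k ∈ F, ∑ l ∈ F, (b k * (starRingEnd ℂ) (b l)) * ftMeasure σ (g k - g l) := by
      rw [show (fun ξ => G ξ * (starRingEnd ℂ) (G ξ)) =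
          fun ξ => ∑ k ∈ F, ∑ l ∈ F,
            (b k * (starRingEnd ℂ) (b l)) * fourierKer (g k - g l) ξ from funext hpt]
      rw [integral_finset_sum F (fun k _ => integrable_finset_sum F (fun l _ => hIker _ _))]
      refine Finset.sum_congr rfl fun k _ => ?_
      rw [integral_finset_sum F (fun l _ => hIker _ _)]
      refine Finset.sum_congr rfl fun l _ => ?_
      rw [integral_const_mul]
      rfl
    have hsq_eq : ((∫ ξ, ‖G ξ‖ ^ 2 ∂σ : ℝ) : ℂ) = ∫ ξ, G ξ * (starRingEnd ℂ) (G ξ) ∂σ := by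
      rw [show ((∫ ξ, ‖G ξ‖ ^ 2 ∂σ : ℝ) : ℂ) = ∫ ξ, ((‖G ξ‖ ^ 2 : ℝ) : ℂ) ∂σ from
        (integral_ofReal (𝕜 := ℂ)).symm]
      refine integral_congr_ae (Filter.Eventually.of_forall fun ξ => ?_)
      show ((‖G ξ‖ ^ 2 : ℝ) : ℂ) = G ξ * (starRingEnd ℂ) (G ξ)
      rw [Complex.mul_conj]
      norm_cast
      rw [Complex.sq_norm]
    have hval : ∫ ξ, ‖G ξ‖ ^ 2 ∂σ = ‖((∫ ξ, ‖G ξ‖ ^ 2 ∂σ : ℝ) : ℂ)‖ := by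
      rw [Complex.norm_real, Real.norm_of_nonneg (integral_nonneg fun ξ => by positivity)]
    calc ∫ ξ, ‖G ξ‖ ^ 2 ∂σ = ‖((∫ ξ, ‖G ξ‖ ^ 2 ∂σ : ℝ) : ℂ)‖ := hval
    _ = ‖∑ k ∈ F, ∑ l ∈ F, (b k * (starRingEnd ℂ) (b l)) * ftMeasure σ (g k - g l)‖ := by
        rw [hsq_eq, hint]
    _ ≤ ∑ k ∈ F, ‖∑ l ∈ F, (b k * (starRingEnd ℂ) (b l)) * ftMeasure σ (g k - g l)‖ :=
        norm_sum_le _ _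
    _ ≤ ∑ k ∈ F, ∑ l ∈ F, ‖(b k * (starRingEnd ℂ) (b l)) * ftMeasure σ (g k - g l)‖ :=
        Finset.sum_le_sum fun k _ => norm_sum_le _ _
    _ ≤ Q := by
        rw [hQ_def]
        refine Finset.sum_le_sum fun k _ => Finset.sum_le_sum fun l _ => ?_
        rw [norm_mul, norm_mul, RCLike.norm_conj, h_bnorm, h_bnorm]
        calc u k * u l * ‖ftMeasure σ (g k - g l)‖
            ≤ u k * u l * mker σT C δ (k - l) :=
              mul_le_mul_of_nonneg_left (hft k l) (mul_nonneg (hu0 k) (hu0 l))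
        _ = u k * mker σT C δ (k - l) * u l := by ring
  -- Claim 2 : Cauchy-Schwarz
  have hrpow2 : ∀ x : ℝ, x ^ (2:ℝ) = x ^ (2:ℕ) := fun x => by
    rw [show (2:ℝ) = ((2:ℕ):ℝ) by norm_num, Real.rpow_natCast]
  have hpq22 : Real.HolderConjugate 2 2 := Real.holderConjugate_iff.mpr ⟨one_lt_two, by norm_num⟩
  have hG2 : MemLp (fun ξ => ‖G ξ‖) (ENNReal.ofReal 2) σ := by
    rw [show ENNReal.ofReal (2:ℝ) = 2 by norm_num [ENNReal.ofReal_ofNat]]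
    exact (MemLp.of_bound hGcont.aestronglyMeasurable CB
      (Filter.Eventually.of_forall hGbd)).norm
  have hf2 : MemLp (fun ξ => ‖f ξ‖) (ENNReal.ofReal 2) σ := by
    rw [show ENNReal.ofReal (2:ℝ) = 2 by norm_num [ENNReal.ofReal_ofNat]]
    exact hf.norm
  have holder : ∫ ξ, ‖G ξ‖ * ‖f ξ‖ ∂σ ≤
      (∫ ξ, ‖G ξ‖ ^ (2:ℝ) ∂σ) ^ ((1:ℝ)/2) * (∫ ξ, ‖f ξ‖ ^ (2:ℝ) ∂σ) ^ ((1:ℝ)/2) := by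
    have h := integral_mul_le_Lp_mul_Lq_of_nonneg hpq22
      (Filter.Eventually.of_forall fun ξ => norm_nonneg (G ξ))
      (Filter.Eventually.of_forall fun ξ => norm_nonneg (f ξ)) hG2 hf2
    simpa using h
  have claim2 : A ≤ (∫ ξ, ‖G ξ‖ ^ 2 ∂σ) ^ ((1:ℝ)/2) * L2n σ f := by
    have hAbound : A ≤ ∫ ξ, ‖G ξ‖ * ‖f ξ‖ ∂σ := by
      calc A = ‖((A:ℝ):ℂ)‖ := by
            rw [Complex.norm_real, Real.norm_of_nonneg hA0]
      _ = ‖∫ ξ, G ξ * f ξ ∂σ‖ := by rw [claim1]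
      _ ≤ ∫ ξ, ‖G ξ * f ξ‖ ∂σ := norm_integral_le_integral_norm _
      _ = ∫ ξ, ‖G ξ‖ * ‖f ξ‖ ∂σ := by
            refine integral_congr_ae (Filter.Eventually.of_forall fun ξ => ?_)
            exact norm_mul _ _
    have e1 : ∫ ξ, ‖G ξ‖ ^ (2:ℝ) ∂σ = ∫ ξ, ‖G ξ‖ ^ 2 ∂σ := by
      refine integral_congr_ae (Filter.Eventually.of_forall fun ξ => ?_)
      exact hrpow2 _
    have e2 : (∫ ξ, ‖f ξ‖ ^ (2:ℝ) ∂σ) ^ ((1:ℝ)/2) = L2n σ f := by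
      rw [L2n]
      congr 1
      refine integral_congr_ae (Filter.Eventually.of_forall fun ξ => ?_)
      exact hrpow2 _
    calc A ≤ ∫ ξ, ‖G ξ‖ * ‖f ξ‖ ∂σ := hAbound
    _ ≤ (∫ ξ, ‖G ξ‖ ^ (2:ℝ) ∂σ) ^ ((1:ℝ)/2) * (∫ ξ, ‖f ξ‖ ^ (2:ℝ) ∂σ) ^ ((1:ℝ)/2) := holder
    _ = (∫ ξ, ‖G ξ‖ ^ 2 ∂σ) ^ ((1:ℝ)/2) * L2n σ f := by rw [e1, e2]
  -- Young's inequality for the quadratic form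
  have hmk := mker_nonneg hσT0 (le_of_lt hC) (δ := δ)
  have young := young_discrete hq2 u hu0 (mker σT C δ) hmk Ms hMs F
  have hupA : ∑ k ∈ F, u k ^ (q / (q - 1)) = A := by
    rw [hA_def]
    refine Finset.sum_congr rfl fun k _ => ?_
    rw [hu_def, ← Real.rpow_mul (norm_nonneg _)]
    congr 1
    field_simp
  rw [hupA] at young
  -- Put everything together
  have hIG0 : 0 ≤ ∫ ξ, ‖G ξ‖ ^ 2 ∂σ := integral_nonneg fun ξ => by positivity
  have key : A ≤ Ms ^ ((1:ℝ)/q) * A ^ ((q-1)/q) * L2n σ f := by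
    calc A ≤ (∫ ξ, ‖G ξ‖ ^ 2 ∂σ) ^ ((1:ℝ)/2) * L2n σ f := claim2
    _ ≤ Q ^ ((1:ℝ)/2) * L2n σ f := by
        refine mul_le_mul_of_nonneg_right
          (Real.rpow_le_rpow hIG0 hGsq_int (by norm_num)) hL2n0
    _ ≤ (Ms ^ ((2:ℝ)/q) * A ^ (2 * ((q-1)/q))) ^ ((1:ℝ)/2) * L2n σ f := by
        refine mul_le_mul_of_nonneg_right
          (Real.rpow_le_rpow (le_trans hIG0 hGsq_int) young (by norm_num)) hL2n0
    _ = Ms ^ ((1:ℝ)/q) * A ^ ((q-1)/q) * L2n σ f := by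
        rw [Real.mul_rpow (Real.rpow_nonneg hMs0 _) (Real.rpow_nonneg hA0 _),
          ← Real.rpow_mul hMs0, ← Real.rpow_mul hA0]
        congr 3
        · ring
        · ring
  rcases eq_or_lt_of_le hA0 with hAz | hApos
  · rw [← hAz]
    exact mul_nonneg hMs0 (Real.rpow_nonneg hL2n0 _)
  · have hsplit : A = A ^ ((q-1)/q) * A ^ ((1:ℝ)/q) := by
      rw [← Real.rpow_add hApos]
      rw [show (q-1)/q + 1/q = 1 by field_simp; ring]
      exact (Real.rpow_one A).symm
    have hcancel : A ^ ((1:ℝ)/q) ≤ Ms ^ ((1:ℝ)/q) * L2n σ f := by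
      have hpow_pos : 0 < A ^ ((q-1)/q) := Real.rpow_pos_of_pos hApos _
      have : A ^ ((q-1)/q) * A ^ ((1:ℝ)/q) ≤ A ^ ((q-1)/q) * (Ms ^ ((1:ℝ)/q) * L2n σ f) := by
        rw [← hsplit]
        calc A ≤ Ms ^ ((1:ℝ)/q) * A ^ ((q-1)/q) * L2n σ f := key
        _ = A ^ ((q-1)/q) * (Ms ^ ((1:ℝ)/q) * L2n σ f) := by ring
      exact le_of_mul_le_mul_left this hpow_pos
    calc A = (A ^ ((1:ℝ)/q)) ^ q := by
          rw [← Real.rpow_mul hA0, one_div, inv_mul_cancel₀ (ne_of_gt hq0), Real.rpow_one]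
    _ ≤ (Ms ^ ((1:ℝ)/q) * L2n σ f) ^ q := by
          refine Real.rpow_le_rpow (Real.rpow_nonneg hA0 _) hcancel (le_of_lt hq0)
    _ = Ms * L2n σ f ^ q := by
          rw [Real.mul_rpow (Real.rpow_nonneg hMs0 _) hL2n0, ← Real.rpow_mul hMs0,
            one_div, inv_mul_cancel₀ (ne_of_gt hq0), Real.rpow_one]

/-- Theorem 2 of the paper: if `|σ̂(x)| ≤ C|x·v|^{−δ}` for `|x| ≥ 1`, then
for `q > 2/δ`, `∫ |Ef|^q w ≲ (sup_{T ∈ 𝕋_v} w(T)) ‖f‖_{L²(σ)}^q` for all bounded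
measurable `w ≥ 0`, where `𝕋_v` is the set of 1-tubes perpendicular to `v`. -/
theorem stmt13 (σ : Measure Plane) [IsFiniteMeasure σ]
    (v : Plane) (hv : v.1 ^ 2 + v.2 ^ 2 = 1) (δ C : ℝ)
    (hδ : 0 < δ) (hδ1 : δ ≤ 1) (hC : 0 < C)
    (hdecay : ∀ x : Plane, 1 ≤ Real.sqrt (x.1 ^ 2 + x.2 ^ 2) →
      x.1 * v.1 + x.2 * v.2 ≠ 0 →
      ‖ftMeasure σ x‖ ≤ C * |x.1 * v.1 + x.2 * v.2| ^ (-δ))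
    (q : ℝ) (hq : 2 / δ < q) :
    ∃ B : ℝ, 0 ≤ B ∧
      ∀ w : Plane → ℝ, Measurable w → (∀ x, 0 ≤ w x) → (∃ M : ℝ, ∀ x, w x ≤ M) →
        ∀ f : Plane → ℂ, MemLp f 2 σ →
          ∫⁻ x, ENNReal.ofReal (‖extOp σ f x‖ ^ q * w x) ≤
            ENNReal.ofReal (B * L2n σ f ^ q) * tubeSup w (-v.2, v.1) := by
  classical
  have hq2 : 2 < q := by
    have h2 : (2:ℝ) ≤ 2 / δ := by
      rw [le_div_iff₀ hδ]; nlinarith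
    linarith
  have hq0 : (0:ℝ) < q := by linarith
  have hδq : 1 < δ * (q / 2) := by
    have : 2 < q * δ := by
      rw [div_lt_iff₀ hδ] at hq; exact hq
    nlinarith
  set σT : ℝ := (σ Set.univ).toReal with hσT_def
  have hσT0 : 0 ≤ σT := ENNReal.toReal_nonneg
  set ms : ℤ → ℝ := fun j => mker σT C δ j ^ (q / 2) with hms_def
  have hms0 : ∀ j, 0 ≤ ms j := fun j => Real.rpow_nonneg (mker_nonneg hσT0 hC.le j) _
  -- summability of the dominating series
  have hsnat : Summable (fun n : ℕ => ms (n : ℤ)) := by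
    apply (summable_nat_add_iff 2).1
    have heq : (fun n : ℕ => ms ((n + 2 : ℕ) : ℤ)) =
        fun n : ℕ => C ^ (q / 2) * (((n:ℝ) + 1) ^ (-(δ * (q / 2)))) := by
      funext n
      have hna : ((n + 2 : ℕ) : ℤ).natAbs = n + 2 := by omega
      rw [hms_def]
      simp only [mker, hna]
      rw [if_neg (by omega)]
      have hcast : ((n + 2 : ℕ) : ℝ) - 1 = (n : ℝ) + 1 := by push_cast; ring
      rw [hcast]
      have hx0 : (0:ℝ) ≤ (n : ℝ) + 1 := by positivity
      rw [Real.mul_rpow hC.le (Real.rpow_nonneg hx0 _), ← Real.rpow_mul hx0]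
      congr 1
      ring
    rw [heq]
    apply Summable.mul_left
    have hbase : Summable (fun n : ℕ => ((n:ℝ)) ^ (-(δ * (q / 2)))) :=
      Real.summable_nat_rpow.2 (by linarith)
    have := (summable_nat_add_iff 1).2 hbase
    refine this.congr fun n => ?_
    congr 1
    push_cast
    ring
  have hmsneg : ∀ n : ℕ, ms (-(n : ℤ)) = ms (n : ℤ) := by
    intro n
    rw [hms_def]
    simp only [mker, Int.natAbs_neg]
  have hsum : Summable ms :=
    Summable.of_nat_of_neg hsnat (by simpa only [hmsneg] using hsnat)
  set Ms : ℝ := ∑' j, ms j with hMs_def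
  have hMs0 : 0 ≤ Ms := tsum_nonneg hms0
  have hMsF : ∀ G : Finset ℤ, ∑ j ∈ G, mker σT C δ j ^ (q / 2) ≤ Ms := fun G =>
    Summable.sum_le_tsum G (fun i _ => hms0 i) hsum
  refine ⟨Ms, hMs0, ?_⟩
  intro w hw hw0 _hwbd f hf
  set T : Plane → ℝ := fun x => x.1 * v.1 + x.2 * v.2 with hT_def
  have hTmeas : Measurable T :=
    (measurable_fst.mul measurable_const).add (measurable_snd.mul measurable_const)
  set S : ℤ → Set Plane := fun k => T ⁻¹' (Set.Ioc ((k:ℝ) - 1/2) ((k:ℝ) + 1/2)) with hS_def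
  have hSmeas : ∀ k, MeasurableSet (S k) := fun k => hTmeas measurableSet_Ioc
  have hSdisj : Pairwise (Function.onFun Disjoint S) := by
    intro k l hkl
    rw [Function.onFun, Set.disjoint_left]
    intro x hxk hxl
    rw [hS_def, Set.mem_preimage, Set.mem_Ioc] at hxk hxl
    apply hkl
    have h1 : (k:ℝ) < (l:ℝ) + 1 := by linarith
    have h2 : (l:ℝ) < (k:ℝ) + 1 := by linarith
    have h1' : k < l + 1 := by exact_mod_cast (by push_cast; linarith : (k:ℝ) < ((l + 1 : ℤ) : ℝ))
    have h2' : l < k + 1 := by exact_mod_cast (by push_cast; linarith : (l:ℝ) < ((k + 1 : ℤ) : ℝ))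
    omega
  have hScover : (⋃ k, S k) = Set.univ := by
    rw [Set.eq_univ_iff_forall]
    intro x
    refine Set.mem_iUnion.2 ⟨⌈T x - 1/2⌉, ?_⟩
    rw [hS_def, Set.mem_preimage, Set.mem_Ioc]
    constructor
    · have := Int.ceil_lt_add_one (T x - 1/2)
      linarith
    · have := Int.le_ceil (T x - 1/2)
      linarith
  have hSpt : ∀ k : ℤ, T ((k:ℝ) * v.1, (k:ℝ) * v.2) = (k:ℝ) := by
    intro k
    rw [hT_def]
    have : (k:ℝ) * v.1 * v.1 + (k:ℝ) * v.2 * v.2 = (k:ℝ) * (v.1 ^ 2 + v.2 ^ 2) := by ring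
    simp only []
    rw [this, hv, mul_one]
  have hSne : ∀ k, (S k).Nonempty := by
    intro k
    refine ⟨((k:ℝ) * v.1, (k:ℝ) * v.2), ?_⟩
    rw [hS_def, Set.mem_preimage, hSpt, Set.mem_Ioc]
    constructor <;> norm_num
  set φ : Plane → ℝ≥0∞ := fun x => (ENNReal.ofReal ‖extOp σ f x‖) ^ q with hφ_def
  set Tub : ℝ≥0∞ := tubeSup w (-v.2, v.1) with hTub_def
  -- per-slab bound
  have hslab : ∀ k : ℤ, ∫⁻ x in S k, ENNReal.ofReal (‖extOp σ f x‖ ^ q * w x) ≤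
      (⨆ x ∈ S k, φ x) * Tub := by
    intro k
    have hsub : S k ⊆ oneTube (-v.2, v.1) ((k:ℝ) * v.1, (k:ℝ) * v.2) := by
      intro x hx
      rw [hS_def, Set.mem_preimage, Set.mem_Ioc] at hx
      show |(x.1 - (k:ℝ) * v.1) * (-(v.1)) + (x.2 - (k:ℝ) * v.2) * (-v.2)| ≤ 1/2
      have he : (x.1 - (k:ℝ) * v.1) * (-(v.1)) + (x.2 - (k:ℝ) * v.2) * (-v.2)
          = (k:ℝ) * (v.1 ^ 2 + v.2 ^ 2) - T x := by rw [hT_def]; ring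
      rw [he, hv, mul_one, abs_le]
      constructor <;> linarith [hx.1, hx.2]
    have hstep1 : ∫⁻ x in S k, ENNReal.ofReal (‖extOp σ f x‖ ^ q * w x) ≤
        ∫⁻ x in S k, (⨆ y ∈ S k, φ y) * ENNReal.ofReal (w x) := by
      refine setLIntegral_mono ((ENNReal.measurable_ofReal.comp hw).const_mul _) ?_
      intro x hx
      rw [ENNReal.ofReal_mul (by positivity)]
      refine mul_le_mul_left ?_ _
      rw [← ENNReal.ofReal_rpow_of_nonneg (norm_nonneg _) hq0.le]
      exact le_biSup φ hx
    have hstep2 : ∫⁻ x in S k, (⨆ y ∈ S k, φ y) * ENNReal.ofReal (w x) =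
        (⨆ y ∈ S k, φ y) * ∫⁻ x in S k, ENNReal.ofReal (w x) :=
      lintegral_const_mul _ (ENNReal.measurable_ofReal.comp hw)
    have hstep3 : ∫⁻ x in S k, ENNReal.ofReal (w x) ≤ Tub := by
      calc ∫⁻ x in S k, ENNReal.ofReal (w x)
          ≤ ∫⁻ x in oneTube (-v.2, v.1) ((k:ℝ) * v.1, (k:ℝ) * v.2), ENNReal.ofReal (w x) :=
            lintegral_mono_set hsub
      _ = wTube w (-v.2, v.1) ((k:ℝ) * v.1, (k:ℝ) * v.2) := rfl
      _ ≤ Tub := le_iSup (fun p => wTube w (-v.2, v.1) p) _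
    calc ∫⁻ x in S k, ENNReal.ofReal (‖extOp σ f x‖ ^ q * w x)
        ≤ ∫⁻ x in S k, (⨆ y ∈ S k, φ y) * ENNReal.ofReal (w x) := hstep1
    _ = (⨆ y ∈ S k, φ y) * ∫⁻ x in S k, ENNReal.ofReal (w x) := hstep2
    _ ≤ (⨆ y ∈ S k, φ y) * Tub := mul_le_mul_right hstep3 _
  -- sum of slab sups
  have hsupsum : ∑' k : ℤ, (⨆ x ∈ S k, φ x) ≤ ENNReal.ofReal (Ms * L2n σ f ^ q) := by
    rw [ENNReal.tsum_eq_iSup_sum]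
    refine iSup_le fun Fs => ?_
    refine sum_biSup_le S hSne φ _ Fs ?_
    intro g hg
    have hg' : ∀ k : ℤ, (g k).1 * v.1 + (g k).2 * v.2 ∈
        Set.Ioc ((k : ℝ) - 1/2) ((k : ℝ) + 1/2) := fun k => hg k
    have hcore := core_estimate σ v hv δ C hδ hC hdecay q hq2 f hf Ms hMs0 hMsF Fs g hg'
    have heach : ∀ k ∈ Fs, φ (g k) = ENNReal.ofReal (‖extOp σ f (g k)‖ ^ q) := by
      intro k _
      rw [hφ_def]
      exact ENNReal.ofReal_rpow_of_nonneg (norm_nonneg _) hq0.le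
    calc ∑ k ∈ Fs, φ (g k) = ∑ k ∈ Fs, ENNReal.ofReal (‖extOp σ f (g k)‖ ^ q) :=
          Finset.sum_congr rfl heach
    _ = ENNReal.ofReal (∑ k ∈ Fs, ‖extOp σ f (g k)‖ ^ q) :=
          (ENNReal.ofReal_sum_of_nonneg fun k _ => Real.rpow_nonneg (norm_nonneg _) _).symm
    _ ≤ ENNReal.ofReal (Ms * L2n σ f ^ q) := ENNReal.ofReal_le_ofReal hcore
  -- main chain
  calc ∫⁻ x, ENNReal.ofReal (‖extOp σ f x‖ ^ q * w x)
      = ∫⁻ x in Set.univ, ENNReal.ofReal (‖extOp σ f x‖ ^ q * w x) :=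
        (setLIntegral_univ _).symm
  _ = ∫⁻ x in ⋃ k : ℤ, S k, ENNReal.ofReal (‖extOp σ f x‖ ^ q * w x) := by rw [hScover]
  _ = ∑' k : ℤ, ∫⁻ x in S k, ENNReal.ofReal (‖extOp σ f x‖ ^ q * w x) :=
        lintegral_iUnion hSmeas hSdisj _
  _ ≤ ∑' k : ℤ, (⨆ x ∈ S k, φ x) * Tub := ENNReal.tsum_le_tsum hslab
  _ = (∑' k : ℤ, ⨆ x ∈ S k, φ x) * Tub := ENNReal.tsum_mul_right
  _ ≤ ENNReal.ofReal (Ms * L2n σ f ^ q) * Tub := mul_le_mul_left hsupsum _
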